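/- Let n and M be integers with 0 ≤ n < M and let t > 0 be real. Then 𝓘ₙ(t) = (it)^{n−M} 𝓘_M(t) − i^{n−1} Σ_{l=⌈n/2⌉}^{⌊(M−1)/2⌋} (2l−1)!!/t^{2l−n+1}, where (−1)!! = 1. -/

import Mathlib

open MeasureTheory

/-- Probabilists' Hermite polynomial `Heₙ(x) = (−1)ⁿ e^{x²/2} dⁿ/dxⁿ e^{−x²/2}`. -/
noncomputable def He (n : ℕ) (x : ℝ) : ℝ :=
  (-1) ^ n * Real.exp (x ^ 2 / 2) * iteratedDeriv n (fun y => Real.exp (-(y ^ 2) / 2)) x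

/-- `𝓘ₙ(t) = ∫₀^∞ Heₙ(ω) e^{−ω²/2} e^{itω} dω`. -/
noncomputable def calI (n : ℕ) (t : ℝ) : ℂ :=
  ∫ ω in Set.Ioi (0 : ℝ),
    (He n ω : ℂ) * Complex.exp (-(ω : ℂ) ^ 2 / 2) * Complex.exp (Complex.I * (t : ℂ) * (ω : ℂ))

/-- `(2l−1)!! = 1·3·⋯·(2l−1)`, with the convention `(−1)!! = 1` (the case `l = 0`). -/
def oddDoubleFactorial (l : ℕ) : ℕ := ∏ i ∈ Finset.range l, (2 * i + 1)

/-!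
Since `(Heₙ e^{-ω²/2})' = -Heₙ₊₁ e^{-ω²/2}`, integrating by parts against `e^{itω}` on `(0, ∞)`
gives the first-order recurrence `𝓘ₙ₊₁(t) = Heₙ(0) + it 𝓘ₙ(t)`. Solving it from `n` up to `M`
expresses `𝓘ₙ` through `(it)^{n-M} 𝓘_M` and the boundary values `He_k(0)`, `n ≤ k < M`. Only
even `k = 2l` contribute, with `He_{2l}(0) = (-1)^l (2l-1)!!`, and
`(it)^{n-2l-1} (-1)^l = i^{n-1} t^{n-2l-1}`.
-/

open Polynomial Filter Finset Topology
open scoped Nat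

theorem eq_zpow_mul_sub_sum_of_succ {K : Type*} [Field K] {a c : ℕ → K} {z : K} (hz : z ≠ 0)
    (h : ∀ k, a (k + 1) = c k + z * a k) {n M : ℕ} (hnM : n ≤ M) :
    a n = z ^ ((n : ℤ) - M) * a M - ∑ k ∈ Ico n M, z ^ ((n : ℤ) - k - 1) * c k := by
  induction M, hnM using Nat.le_induction with
  | base => simp
  | succ M hle ih =>
    have hstep : z ^ ((n : ℤ) - M) * a M = z ^ ((n : ℤ) - (M + 1 : ℕ)) * a (M + 1) -
        z ^ ((n : ℤ) - M - 1) * c M := by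
      rw [h, Nat.cast_succ, ← sub_sub, zpow_sub_one₀ hz]
      field_simp
      ring
    rw [ih, hstep, sum_Ico_succ_top hle]
    ring

-- `0 < M` is needed: for `M = 0` the truncated `(M - 1) / 2` is `0`, not `-1`.
theorem sum_Ico_eq_sum_Icc_two_mul {β : Type*} [AddCommMonoid β] {f : ℕ → β}
    (hf : ∀ k, Odd k → f k = 0) (n : ℕ) {M : ℕ} (hM : 0 < M) :
    ∑ k ∈ Ico n M, f k = ∑ l ∈ Icc ((n + 1) / 2) ((M - 1) / 2), f (2 * l) := by
  rw [← sum_image (g := (2 * ·)) (by intro a _ b _ h; simpa using h)]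
  refine (sum_subset ?_ fun k hk hk' => hf k ?_).symm
  · intro k hk
    simp only [mem_image, mem_Icc] at hk
    obtain ⟨l, hl, rfl⟩ := hk
    simp only [mem_Ico]
    omega
  · rcases Nat.even_or_odd k with ⟨l, rfl⟩ | hodd
    · refine absurd (mem_image.2 ⟨l, ?_, by ring⟩) hk'
      simp only [mem_Ico, mem_Icc] at hk ⊢
      omega
    · exact hodd

theorem oddDoubleFactorial_eq_doubleFactorial (l : ℕ) : oddDoubleFactorial l = (2 * l - 1)‼ := by
  cases l with
  | zero => rfl
  | succ m =>
    rw [oddDoubleFactorial, prod_range_succ', show 2 * (m + 1) - 1 = 2 * m + 1 by omega,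
      Nat.doubleFactorial_eq_prod_odd]
    simp [mul_add, add_assoc]

theorem He_eq_aeval_hermite (n : ℕ) (x : ℝ) : He n x = aeval x (hermite n) := by
  rw [He, iteratedDeriv_eq_iterate, hermite_eq_deriv_gaussian']
  simp only [neg_div]
  ring

theorem He_zero_of_odd {n : ℕ} (hn : Odd n) : He n 0 = 0 := by
  rw [He_eq_aeval_hermite, ← coeff_zero_eq_aeval_zero',
    coeff_hermite_of_odd_add (by simpa using hn)]
  simp

theorem He_two_mul_zero (l : ℕ) : He (2 * l) 0 = (-1) ^ l * oddDoubleFactorial l := by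
  rw [He_eq_aeval_hermite, ← coeff_zero_eq_aeval_zero',
    coeff_hermite_of_even_add (by simp), oddDoubleFactorial_eq_doubleFactorial]
  simp

section GaussianWeight

theorem integrableOn_pow_mul_exp_neg_sq_div_two (k : ℕ) :
    IntegrableOn (fun x : ℝ => x ^ k * Real.exp (-x ^ 2 / 2)) (Set.Ioi 0) := by
  have h := integrableOn_rpow_mul_exp_neg_mul_sq (b := 1 / 2) (by norm_num)
    (by linarith [k.cast_nonneg (α := ℝ)] : (-1 : ℝ) < k)
  refine h.congr_fun (fun x _ => ?_) measurableSet_Ioi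
  simp only [Real.rpow_natCast]
  ring_nf

theorem tendsto_pow_mul_exp_neg_sq_div_two (k : ℕ) :
    Tendsto (fun x : ℝ => x ^ k * Real.exp (-x ^ 2 / 2)) atTop (𝓝 0) := by
  have h := (rpow_mul_exp_neg_mul_sq_isLittleO_exp_neg (b := 1 / 2) (by norm_num) k).trans_tendsto
    (Real.tendsto_exp_atBot.comp (tendsto_id.const_mul_atTop_of_neg (by norm_num)))
  refine h.congr fun x => ?_
  simp only [Real.rpow_natCast]
  ring_nf

variable {R : Type*} [CommSemiring R] [Algebra R ℝ] (p : R[X])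

theorem aeval_mul_exp_neg_sq_div_two_eq_sum (x : ℝ) :
    aeval x p * Real.exp (-x ^ 2 / 2) =
      ∑ i ∈ range (p.natDegree + 1),
        algebraMap R ℝ (p.coeff i) * (x ^ i * Real.exp (-x ^ 2 / 2)) := by
  simp only [aeval_eq_sum_range, Algebra.smul_def, sum_mul, mul_assoc]

theorem integrableOn_aeval_mul_exp_neg_sq_div_two :
    IntegrableOn (fun x => aeval x p * Real.exp (-x ^ 2 / 2)) (Set.Ioi 0) := by
  simp only [aeval_mul_exp_neg_sq_div_two_eq_sum]
  exact integrable_finsetSum _ fun i _ => (integrableOn_pow_mul_exp_neg_sq_div_two i).const_mul _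

theorem tendsto_aeval_mul_exp_neg_sq_div_two :
    Tendsto (fun x => aeval x p * Real.exp (-x ^ 2 / 2)) atTop (𝓝 0) := by
  simp only [aeval_mul_exp_neg_sq_div_two_eq_sum]
  simpa using tendsto_finsetSum _ fun i _ =>
    (tendsto_pow_mul_exp_neg_sq_div_two i).const_mul (algebraMap R ℝ (p.coeff i))

end GaussianWeight

open Complex

theorem norm_cexp_I_mul_ofReal_mul (t ω : ℝ) : ‖cexp (I * t * ω)‖ = 1 := by
  rw [show I * t * ω = ((t * ω : ℝ) : ℂ) * I by push_cast; ring, norm_exp_ofReal_mul_I]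

noncomputable def hermiteGauss (n : ℕ) (x : ℝ) : ℝ := He n x * Real.exp (-x ^ 2 / 2)

theorem hermiteGauss_eq_aeval (n : ℕ) :
    hermiteGauss n = fun x => aeval x (hermite n) * Real.exp (-x ^ 2 / 2) := by
  funext x
  rw [hermiteGauss, He_eq_aeval_hermite]

theorem hasDerivAt_hermiteGauss (n : ℕ) (x : ℝ) :
    HasDerivAt (hermiteGauss n) (-hermiteGauss (n + 1) x) x := by
  have hG : HasDerivAt (fun y : ℝ => Real.exp (-y ^ 2 / 2)) (-x * Real.exp (-x ^ 2 / 2)) x :=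
    ((hasDerivAt_pow 2 x).fun_neg.div_const 2).exp.congr_deriv (by ring)
  rw [hermiteGauss_eq_aeval, hermiteGauss_eq_aeval]
  refine (((hermite n).hasDerivAt_aeval x).fun_mul hG).congr_deriv ?_
  simp only [hermite_succ, map_sub, map_mul, aeval_X]
  ring

theorem calI_eq_integral_hermiteGauss (n : ℕ) (t : ℝ) :
    calI n t = ∫ ω in Set.Ioi 0, (hermiteGauss n ω : ℂ) * cexp (I * t * ω) := by
  simp only [calI, hermiteGauss, ofReal_mul, ofReal_exp]
  push_cast
  rfl

theorem integrableOn_hermiteGauss_mul_cexp (n : ℕ) (t : ℝ) :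
    IntegrableOn (fun ω : ℝ => (hermiteGauss n ω : ℂ) * cexp (I * t * ω)) (Set.Ioi 0) := by
  rw [hermiteGauss_eq_aeval]
  exact (integrableOn_aeval_mul_exp_neg_sq_div_two _).ofReal.mul_bdd (c := 1)
    (by fun_prop : Continuous fun ω : ℝ => cexp (I * t * ω)).aestronglyMeasurable
    (ae_of_all _ fun ω => (norm_cexp_I_mul_ofReal_mul t ω).le)

theorem tendsto_hermiteGauss_mul_cexp (n : ℕ) (t : ℝ) :
    Tendsto (fun ω : ℝ => (hermiteGauss n ω : ℂ) * cexp (I * t * ω)) atTop (𝓝 0) := by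
  refine squeeze_zero_norm (fun ω => ?_)
    (by simpa only [norm_zero] using (tendsto_aeval_mul_exp_neg_sq_div_two (hermite n)).norm)
  rw [norm_mul, norm_cexp_I_mul_ofReal_mul, mul_one, norm_real, hermiteGauss_eq_aeval]

theorem calI_succ (n : ℕ) (t : ℝ) : calI (n + 1) t = He n 0 + I * t * calI n t := by
  have hexp (ω : ℝ) :
      HasDerivAt (fun y : ℝ => cexp (I * t * y)) (cexp (I * t * ω) * (I * t)) ω := by
    simpa using (((hasDerivAt_id (ω : ℂ)).const_mul (I * t)).cexp).comp_ofReal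
  have hderiv (ω : ℝ) : HasDerivAt (fun y : ℝ => (hermiteGauss n y : ℂ) * cexp (I * t * y))
      (-((hermiteGauss (n + 1) ω : ℂ) * cexp (I * t * ω)) +
        I * t * ((hermiteGauss n ω : ℂ) * cexp (I * t * ω))) ω :=
    ((hasDerivAt_hermiteGauss n ω).ofReal_comp.fun_mul (hexp ω)).congr_deriv (by push_cast; ring)
  have hint_succ := integrableOn_hermiteGauss_mul_cexp (n + 1) t
  have hint := (integrableOn_hermiteGauss_mul_cexp n t).const_mul (I * t)
  have hftc := integral_Ioi_of_hasDerivAt_of_tendsto' (fun ω _ => hderiv ω)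
    (hint_succ.neg.add hint) (tendsto_hermiteGauss_mul_cexp n t)
  rw [integral_add (f := fun ω => -((hermiteGauss (n + 1) ω : ℂ) * cexp (I * t * ω)))
      hint_succ.neg hint, integral_neg, integral_const_mul,
    ← calI_eq_integral_hermiteGauss, ← calI_eq_integral_hermiteGauss] at hftc
  have hboundary : (hermiteGauss n 0 : ℂ) * cexp (I * t * (0 : ℝ)) = He n 0 := by
    simp [hermiteGauss]
  rw [hboundary] at hftc
  linear_combination -hftc

theorem I_mul_ofReal_zpow_mul_neg_one_pow (t : ℝ) {n l : ℕ} (hnl : n ≤ 2 * l) :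
    (I * t) ^ ((n : ℤ) - (2 * l : ℕ) - 1) * (-1) ^ l = I ^ ((n : ℤ) - 1) / t ^ (2 * l - n + 1) := by
  have hI : I ^ ((n : ℤ) - (2 * l : ℕ) - 1) = I ^ ((n : ℤ) - 1) / (-1) ^ l := by
    rw [sub_right_comm, zpow_sub₀ I_ne_zero, zpow_natCast, pow_mul, I_sq]
  have ht : (t : ℂ) ^ ((n : ℤ) - (2 * l : ℕ) - 1) = ((t : ℂ) ^ (2 * l - n + 1))⁻¹ := by
    rw [← zpow_natCast, ← zpow_neg]
    push_cast [Nat.cast_sub hnl]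
    ring_nf
  rw [mul_zpow, hI, ht]
  field_simp

theorem stmt_3 (n M : ℕ) (hnM : n < M) (t : ℝ) (ht : 0 < t) :
    calI n t = (Complex.I * (t : ℂ)) ^ ((n : ℤ) - (M : ℤ)) * calI M t -
      Complex.I ^ ((n : ℤ) - 1) *
        ∑ l ∈ Finset.Icc ((n + 1) / 2) ((M - 1) / 2),
          (oddDoubleFactorial l : ℂ) / (t : ℂ) ^ (2 * l - n + 1) := by
  have ht' : (t : ℂ) ≠ 0 := ofReal_ne_zero.2 ht.ne'
  refine (eq_zpow_mul_sub_sum_of_succ (a := fun k => calI k t) (mul_ne_zero I_ne_zero ht')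
    (fun k => calI_succ k t) hnM.le).trans ?_
  rw [sum_Ico_eq_sum_Icc_two_mul (f := fun k => (I * t) ^ ((n : ℤ) - k - 1) * (He k 0 : ℂ))
    (fun k hk => by simp [He_zero_of_odd hk]) n (by omega), mul_sum]
  congr 1
  refine sum_congr rfl fun l hl => ?_
  have hnl : n ≤ 2 * l := by
    simp only [mem_Icc] at hl
    omega
  rw [He_two_mul_zero, ← mul_div_assoc, mul_div_right_comm,
    ← I_mul_ofReal_zpow_mul_neg_one_pow t hnl]
  push_cast
  ring
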